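/- Let G be a connected split graph. Then G is matching-decyclable if and only if G is a star, a double star, a triangle with pendant vertices, or a diamond with pendant vertices all attached to a same triangle. -/

import Mathlib

open SimpleGraph

/-- `M` is a matching contained in the edge set of `G`. -/
def IsMatchingIn {V : Type*} (G : SimpleGraph V) (M : Set (Sym2 V)) : Prop :=
  M ⊆ G.edgeSet ∧ ∀ e ∈ M, ∀ f ∈ M, e ≠ f → ∀ v : V, v ∈ e → v ∉ f

/-- `G` is matching-decyclable: some matching `M ⊆ E(G)` has `G - M` acyclic. -/
def MDecyclable {V : Type*} (G : SimpleGraph V) : Prop :=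
  ∃ M : Set (Sym2 V), IsMatchingIn G M ∧ (G.deleteEdges M).IsAcyclic

/-- `G` is sparse: every nonempty subgraph `H` satisfies `|E(H)| ≤ ⌊3|V(H)|/2⌋ - 1`. -/
def Sparse {V : Type*} (G : SimpleGraph V) : Prop :=
  ∀ H : G.Subgraph, H.verts.Nonempty →
    Nat.card H.edgeSet ≤ 3 * Nat.card H.verts / 2 - 1

/-- A graph is 2-connected: connected, at least 3 vertices, and no cut vertex. -/
def TwoConnected {V : Type*} (G : SimpleGraph V) : Prop :=
  G.Connected ∧ 3 ≤ Nat.card V ∧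
    ∀ v : V, (((⊤ : G.Subgraph).deleteVerts {v}).coe).Connected

/-- `G` is fairly cubic: exactly two vertices of degree 2, the rest of degree 3. -/
def FairlyCubic {V : Type*} [Fintype V] (G : SimpleGraph V) [DecidableRel G.Adj] : Prop :=
  Nat.card {v : V // G.degree v = 2} = 2 ∧ ∀ v : V, G.degree v = 2 ∨ G.degree v = 3

def diamondGraph : SimpleGraph (Fin 4) :=
  SimpleGraph.fromEdgeSet {s(0,1), s(0,2), s(0,3), s(1,2), s(2,3)}

def triangleGraph : SimpleGraph (Fin 3) := ⊤

def gemGraph : SimpleGraph (Fin 5) :=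
  SimpleGraph.fromEdgeSet {s(0,1), s(1,2), s(2,3), s(0,4), s(1,4), s(2,4), s(3,4)}

def houseGraph : SimpleGraph (Fin 5) :=
  SimpleGraph.fromEdgeSet {s(0,1), s(1,2), s(2,3), s(0,3), s(0,4), s(1,4)}

def dominoGraph : SimpleGraph (Fin 6) :=
  SimpleGraph.fromEdgeSet {s(0,1), s(1,2), s(2,3), s(0,3), s(1,4), s(4,5), s(2,5)}

/-- `K_{3,3}` minus one edge. -/
def K33minus : SimpleGraph (Fin 3 ⊕ Fin 3) :=
  SimpleGraph.fromEdgeSet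
    {e ∈ (completeBipartiteGraph (Fin 3) (Fin 3)).edgeSet | e ≠ s(Sum.inl 0, Sum.inr 0)}

/-- `G` contains `H` as a (not necessarily induced) subgraph. -/
def ContainsSub {V W : Type*} (G : SimpleGraph V) (H : SimpleGraph W) : Prop :=
  ∃ B : G.Subgraph, Nonempty (B.coe ≃g H)

/-- Chordal: no induced cycle of length at least 4. -/
def Chordal {V : Type*} (G : SimpleGraph V) : Prop :=
  ∀ n : ℕ, 4 ≤ n → IsEmpty (SimpleGraph.cycleGraph n ↪g G)

/-- Distance-hereditary: no induced house, hole, domino, or gem. -/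
def DistHereditary {V : Type*} (G : SimpleGraph V) : Prop :=
  IsEmpty (houseGraph ↪g G) ∧ IsEmpty (dominoGraph ↪g G) ∧ IsEmpty (gemGraph ↪g G) ∧
    ∀ n : ℕ, 5 ≤ n → IsEmpty (SimpleGraph.cycleGraph n ↪g G)

/-- `v` is a cut vertex of `G`. -/
def IsCutVertex {V : Type*} (G : SimpleGraph V) (v : V) : Prop :=
  G.Connected ∧ ¬ (((⊤ : G.Subgraph).deleteVerts {v}).coe).Connected

/-- A block of `G`: either (the subgraph spanned by) a bridge, or a maximal
2-connected subgraph. -/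
def IsBlock {V : Type*} (G : SimpleGraph V) (B : G.Subgraph) : Prop :=
  (∃ u w : V, G.IsBridge s(u, w) ∧ B.verts = {u, w} ∧ B.edgeSet = {s(u, w)}) ∨
  (TwoConnected B.coe ∧ ∀ B' : G.Subgraph, B ≤ B' → TwoConnected B'.coe → B' = B)

/-- A leaf block: a block containing exactly one cut vertex of `G`. -/
def IsLeafBlock {V : Type*} (G : SimpleGraph V) (B : G.Subgraph) : Prop :=
  IsBlock G B ∧ ∃! v : V, v ∈ B.verts ∧ IsCutVertex G v

/-- A chain: a connected graph with exactly two leaf blocks, whose leaf blocks are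
diamonds and whose non-leaf blocks are triangles. -/
def IsChainGraph {V : Type*} (G : SimpleGraph V) : Prop :=
  G.Connected ∧
  Nat.card {B : G.Subgraph // IsLeafBlock G B} = 2 ∧
  (∀ B : G.Subgraph, IsLeafBlock G B → Nonempty (B.coe ≃g diamondGraph)) ∧
  (∀ B : G.Subgraph, IsBlock G B → ¬ IsLeafBlock G B → Nonempty (B.coe ≃g triangleGraph))



/-- A split graph: the vertex set partitions into a clique and an independent set. -/
def SplitGraph {V : Type*} (G : SimpleGraph V) : Prop :=
  ∃ K I : Set V, (∀ v : V, v ∈ K ∨ v ∈ I) ∧ Disjoint K I ∧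
    G.IsClique K ∧ ∀ u ∈ I, ∀ v ∈ I, ¬ G.Adj u v

/-- `G` is a star `K_{1,p}` with center `c`. -/
def IsStar {V : Type*} (G : SimpleGraph V) : Prop :=
  ∃ c : V, (∀ v : V, v ≠ c → G.Adj c v) ∧ ∀ u v : V, G.Adj u v → u = c ∨ v = c

/-- `G` is a double star: two stars together with an edge joining their centers. -/
def IsDoubleStar {V : Type*} (G : SimpleGraph V) : Prop :=
  ∃ c₁ c₂ : V, c₁ ≠ c₂ ∧ G.Adj c₁ c₂ ∧
    ∀ v : V, v ≠ c₁ → v ≠ c₂ →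
      (G.Adj c₁ v ∨ G.Adj c₂ v) ∧ ¬ (G.Adj c₁ v ∧ G.Adj c₂ v) ∧
      ∀ w : V, G.Adj v w → w = c₁ ∨ w = c₂

/-- `G` is a triangle with pendant vertices. -/
def IsTriangleWithPendants {V : Type*} (G : SimpleGraph V) : Prop :=
  ∃ a b c : V, a ≠ b ∧ a ≠ c ∧ b ≠ c ∧ G.Adj a b ∧ G.Adj a c ∧ G.Adj b c ∧
    ∀ v : V, v ≠ a → v ≠ b → v ≠ c →
      ∃! w : V, G.Adj v w ∧ (w = a ∨ w = b ∨ w = c) ∧ ∀ u : V, G.Adj v u → u = w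

/-- `G` is a diamond with pendant vertices all attached to a same triangle. -/
def IsDiamondWithPendants {V : Type*} (G : SimpleGraph V) : Prop :=
  ∃ a b c d : V, ([a, b, c, d] : List V).Nodup ∧
    G.Adj a b ∧ G.Adj a c ∧ G.Adj a d ∧ G.Adj b c ∧ G.Adj c d ∧ ¬ G.Adj b d ∧
    ∀ v : V, v ≠ a → v ≠ b → v ≠ c → v ≠ d →
      ∃! w : V, G.Adj v w ∧ (w = a ∨ w = b ∨ w = c) ∧ ∀ u : V, G.Adj v u → u = w

/-!
Deleting a matching from a graph on `n` vertices removes at most `⌊n/2⌋` edges, and a forest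
has fewer than `n` edges, so every finite subgraph of a matching-decyclable graph has fewer than
`n + ⌊n/2⌋` edges. This rules out `K₄`, the book `K₂ + 3K₁` and the gem as subgraphs. In a
connected split graph with clique `K`, the first gives `|K| ≤ 3`; every other vertex has all its
neighbours in `K`, and the book and the gem leave only the four listed shapes.
Conversely, these become forests after deleting no edge, the edge `ab`, or the edges `ab` and `cd`:
then every vertex outside `{a, b, c}` has at most one neighbour while `a` and `b` are not adjacent.
-/

namespace SimpleGraph

variable {V : Type*} {G : SimpleGraph V}

theorem Walk.IsCycle.exists_adj_adj_of_mem_support {u v : V} {p : G.Walk u u}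
    (hp : p.IsCycle) (hv : v ∈ p.support) :
    ∃ s t, s ≠ t ∧ G.Adj v s ∧ G.Adj v t ∧ s ∈ p.support ∧ t ∈ p.support := by
  obtain ⟨s, t, hst, hN⟩ := Set.ncard_eq_two.mp (hp.ncard_neighborSet_toSubgraph_eq_two hv)
  have hs : p.toSubgraph.Adj v s := by rw [← Subgraph.mem_neighborSet, hN]; simp
  have ht : p.toSubgraph.Adj v t := by rw [← Subgraph.mem_neighborSet, hN]; simp
  exact ⟨s, t, hst, hs.adj_sub, ht.adj_sub, p.mem_verts_toSubgraph.mp hs.snd_mem,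
    p.mem_verts_toSubgraph.mp ht.snd_mem⟩

/-- Every vertex of a cycle has two neighbours on it, so a cycle can only use `a`, `b`, `c`;
but then `a` and `b` would both have to lie on it and be adjacent. -/
theorem isAcyclic_of_neighborSet_subsingleton {a b c : V}
    (hS : ∀ u, u ≠ a → u ≠ b → u ≠ c → (G.neighborSet u).Subsingleton) (hab : ¬ G.Adj a b) :
    G.IsAcyclic := by
  intro v p hp
  have hsupp : ∀ w ∈ p.support, w = a ∨ w = b ∨ w = c := by
    intro w hw
    by_contra! h
    obtain ⟨s, t, hst, hs, ht, -, -⟩ := hp.exists_adj_adj_of_mem_support hw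
    exact hst (hS w h.1 h.2.1 h.2.2 hs ht)
  have hc : ∀ w ∈ p.support, w = c := by
    intro w hw
    obtain ⟨s, t, hst, hs, ht, hs', ht'⟩ := hp.exists_adj_adj_of_mem_support hw
    rcases hsupp w hw with rfl | rfl | rfl <;> rcases hsupp s hs' with rfl | rfl | rfl <;>
      rcases hsupp t ht' with rfl | rfl | rfl <;> simp_all [adj_comm]
  obtain ⟨s, -, -, hs, -, hs', -⟩ := hp.exists_adj_adj_of_mem_support p.start_mem_support
  exact hs.ne ((hc v p.start_mem_support).trans (hc s hs').symm)

theorem IsAcyclic.ncard_edgeSet_lt [Finite V] [Nonempty V] (h : G.IsAcyclic) :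
    G.edgeSet.ncard < Nat.card V := by
  obtain ⟨T, hGT, -, hT⟩ := connected_top.exists_isTree_le_of_le_of_isAcyclic le_top h
  have hcard := (isTree_iff_connected_and_card.mp hT).2
  rw [Nat.card_coe_set_eq] at hcard
  calc G.edgeSet.ncard ≤ T.edgeSet.ncard := Set.ncard_le_ncard (edgeSet_mono hGT)
    _ < Nat.card V := by omega

theorem Connected.exists_adj_of_ne (hc : G.Connected) {u w : V} (h : u ≠ w) :
    ∃ t, G.Adj u t :=
  have : Nontrivial V := ⟨u, w, h⟩
  hc.preconnected.exists_adj_of_nontrivial u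

end SimpleGraph

open scoped Finset

section

variable {V W : Type*} {G : SimpleGraph V} {M : Set (Sym2 V)}

theorem IsMatchingIn.two_mul_ncard_le [Finite V] (hM : IsMatchingIn G M) :
    2 * M.ncard ≤ Nat.card V := by
  classical
  have := Fintype.ofFinite V
  have hM' := M.toFinite
  have hdisj : (hM'.toFinset : Set (Sym2 V)).PairwiseDisjoint Sym2.toFinset :=
    fun e he f hf hef => Finset.disjoint_left.mpr fun v hve hvf =>
      hM.2 e (by simpa using he) f (by simpa using hf) hef v
        (Sym2.mem_toFinset.mp hve) (Sym2.mem_toFinset.mp hvf)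
  calc 2 * M.ncard = ∑ e ∈ hM'.toFinset, #e.toFinset := by
        rw [Finset.sum_congr rfl fun e he => Sym2.card_toFinset_of_not_isDiag e
          (G.not_isDiag_of_mem_edgeSet (hM.1 (by simpa using he))),
          Set.ncard_eq_toFinset_card M hM', Finset.sum_const, smul_eq_mul, mul_comm]
    _ = #(hM'.toFinset.biUnion Sym2.toFinset) := (Finset.card_biUnion hdisj).symm
    _ ≤ Nat.card V := by rw [Nat.card_eq_fintype_card]; exact Finset.card_le_univ _

theorem isMatchingIn_singleton {e : Sym2 V} (he : e ∈ G.edgeSet) : IsMatchingIn G {e} :=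
  ⟨Set.singleton_subset_iff.mpr he, fun _ h₁ _ h₂ hne => absurd (h₁.trans h₂.symm) hne⟩

theorem isMatchingIn_pair {a b c d : V} (hab : G.Adj a b) (hcd : G.Adj c d) (hac : a ≠ c)
    (had : a ≠ d) (hbc : b ≠ c) (hbd : b ≠ d) : IsMatchingIn G {s(a, b), s(c, d)} := by
  refine ⟨Set.insert_subset_iff.mpr ⟨hab, Set.singleton_subset_iff.mpr hcd⟩, ?_⟩
  rintro e (rfl | rfl) f (rfl | rfl) hef v hv hv' <;> simp only [Sym2.mem_iff] at hv hv' <;>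
    grind

theorem SimpleGraph.IsAcyclic.mDecyclable (h : G.IsAcyclic) : MDecyclable G :=
  ⟨∅, ⟨Set.empty_subset _, fun _ he => he.elim⟩, by rwa [deleteEdges_empty]⟩

theorem MDecyclable.ncard_edgeSet_lt [Finite V] [Nonempty V] (h : MDecyclable G) :
    G.edgeSet.ncard < Nat.card V + Nat.card V / 2 := by
  obtain ⟨M, hM, hA⟩ := h
  have hsplit : G.edgeSet ⊆ (G.deleteEdges M).edgeSet ∪ M := by
    rw [edgeSet_deleteEdges]; exact Set.subset_sdiff_union _ _
  calc G.edgeSet.ncard ≤ ((G.deleteEdges M).edgeSet ∪ M).ncard := Set.ncard_le_ncard hsplit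
    _ ≤ (G.deleteEdges M).edgeSet.ncard + M.ncard := Set.ncard_union_le _ _
    _ < Nat.card V + Nat.card V / 2 := add_lt_add_of_lt_of_le hA.ncard_edgeSet_lt
      ((Nat.le_div_iff_mul_le two_pos).mpr (by linarith [hM.two_mul_ncard_le]))

theorem MDecyclable.comap {H : SimpleGraph W} (f : H →g G) (hf : Function.Injective f)
    (h : MDecyclable G) : MDecyclable H := by
  obtain ⟨M, hM, hA⟩ := h
  refine ⟨{e ∈ H.edgeSet | e.map f ∈ M}, ⟨fun e he => he.1, ?_⟩, ?_⟩
  · rintro e ⟨-, he⟩ e' ⟨-, he'⟩ hne v hv hv'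
    exact hM.2 _ he _ he' ((Sym2.map.injective hf).ne hne) (f v)
      (Sym2.mem_map.mpr ⟨v, hv, rfl⟩) (Sym2.mem_map.mpr ⟨v, hv', rfl⟩)
  · refine hA.comap ⟨f, fun {a b} hab => ?_⟩ hf
    rw [deleteEdges_adj] at hab ⊢
    exact ⟨f.map_rel hab.1, fun hm => hab.2 ⟨hab.1, by simpa using hm⟩⟩

theorem not_mDecyclable_of_hom [Finite W] [Nonempty W] {H : SimpleGraph W} (f : H →g G)
    (hf : Function.Injective f) (hH : Nat.card W + Nat.card W / 2 ≤ H.edgeSet.ncard) :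
    ¬ MDecyclable G :=
  fun h => (h.comap f hf).ncard_edgeSet_lt.not_ge hH

def bookGraph : SimpleGraph (Fin 5) :=
  SimpleGraph.fromEdgeSet {s(0,1), s(0,2), s(0,3), s(0,4), s(1,2), s(1,3), s(1,4)}

theorem not_mDecyclable_of_K4 {a b c d : V} (hab : G.Adj a b) (hac : G.Adj a c)
    (had : G.Adj a d) (hbc : G.Adj b c) (hbd : G.Adj b d) (hcd : G.Adj c d) :
    ¬ MDecyclable G := by
  let f : (⊤ : SimpleGraph (Fin 4)) →g G := ⟨![a, b, c, d], fun {i j} hij => by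
    fin_cases i <;> fin_cases j <;> simp at hij ⊢ <;> first | assumption | exact Adj.symm ‹_›⟩
  refine not_mDecyclable_of_hom f (Hom.injective_of_top_hom f) ?_
  rw [Nat.card_eq_fintype_card, Fintype.card_fin, Set.ncard_eq_toFinset_card']
  decide

theorem not_mDecyclable_of_book {x y u v w : V} (huv : u ≠ v) (huw : u ≠ w) (hvw : v ≠ w)
    (hxy : G.Adj x y) (hxu : G.Adj x u) (hxv : G.Adj x v) (hxw : G.Adj x w)
    (hyu : G.Adj y u) (hyv : G.Adj y v) (hyw : G.Adj y w) : ¬ MDecyclable G := by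
  refine not_mDecyclable_of_hom (H := bookGraph) ⟨![x, y, u, v, w], fun {i j} hij => ?_⟩ ?_ ?_
  · simp only [bookGraph, fromEdgeSet_adj] at hij
    fin_cases i <;> fin_cases j <;> simp at hij ⊢ <;> first | assumption | exact Adj.symm ‹_›
  · have := hxy.ne; have := hxu.ne; have := hxv.ne; have := hxw.ne
    have := hyu.ne; have := hyv.ne; have := hyw.ne
    intro i j hij
    fin_cases i <;> fin_cases j <;> first | rfl | exact absurd hij ‹_› | exact absurd hij.symm ‹_›
  · rw [bookGraph, edgeSet_fromEdgeSet, sdiff_eq_left.mpr (by simp [Set.disjoint_left])]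
    simp [Set.ncard_insert_of_notMem]

theorem not_mDecyclable_of_gem {a b c d e : V} (hac : a ≠ c) (hbd : b ≠ d) (had : a ≠ d)
    (hab : G.Adj a b) (hbc : G.Adj b c) (hcd : G.Adj c d)
    (hea : G.Adj e a) (heb : G.Adj e b) (hec : G.Adj e c) (hed : G.Adj e d) :
    ¬ MDecyclable G := by
  refine not_mDecyclable_of_hom (H := gemGraph) ⟨![a, b, c, d, e], fun {i j} hij => ?_⟩ ?_ ?_
  · simp only [gemGraph, fromEdgeSet_adj] at hij
    fin_cases i <;> fin_cases j <;> simp at hij ⊢ <;> first | assumption | exact Adj.symm ‹_›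
  · have := hab.ne; have := hbc.ne; have := hcd.ne
    have := hea.ne; have := heb.ne; have := hec.ne; have := hed.ne
    intro i j hij
    fin_cases i <;> fin_cases j <;> first | rfl | exact absurd hij ‹_› | exact absurd hij.symm ‹_›
  · rw [gemGraph, edgeSet_fromEdgeSet, sdiff_eq_left.mpr (by simp [Set.disjoint_left])]
    simp [Set.ncard_insert_of_notMem]

theorem isStar_of_forall_adj (hc : G.Connected) {c : V}
    (h : ∀ u v, G.Adj u v → u = c ∨ v = c) : IsStar G := by
  refine ⟨c, fun v hv => ?_, h⟩
  obtain ⟨t, ht⟩ := hc.exists_adj_of_ne hv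
  obtain rfl := (h v t ht).resolve_left hv
  exact ht.symm

theorem isDoubleStar_of_forall_adj (hc : G.Connected) {x y : V} (hxy : G.Adj x y)
    (hout : ∀ u ∉ ({x, y} : Set V), G.neighborSet u ⊆ {x, y})
    (hcommon : ∀ u, ¬ (G.Adj u x ∧ G.Adj u y)) : IsDoubleStar G := by
  refine ⟨x, y, hxy.ne, hxy, fun v hvx hvy => ?_⟩
  have hv : v ∉ ({x, y} : Set V) := by simp [hvx, hvy]
  refine ⟨?_, fun h => hcommon v ⟨h.1.symm, h.2.symm⟩, fun t ht => hout v hv ht⟩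
  obtain ⟨t, ht⟩ := hc.exists_adj_of_ne hvx
  rcases hout v hv ht with rfl | rfl
  exacts [Or.inl ht.symm, Or.inr ht.symm]

theorem neighborSet_subsingleton_of_forall_adj_eq {u w : V} (hw : ∀ t, G.Adj u t → t = w) :
    (G.neighborSet u).Subsingleton :=
  fun s hs t ht => (hw s hs).trans (hw t ht).symm

theorem neighborSet_subsingleton_of_not_adj_adj {u a b c : V}
    (hS : G.neighborSet u ⊆ {a, b, c}) (hab : G.Adj u a → ¬ G.Adj u b)
    (hac : G.Adj u a → ¬ G.Adj u c) (hbc : G.Adj u b → ¬ G.Adj u c) :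
    (G.neighborSet u).Subsingleton := by
  intro s hs t ht
  rcases hS hs with rfl | rfl | rfl <;> rcases hS ht with rfl | rfl | rfl <;> simp_all

theorem existsUnique_adj_of_neighborSet_subsingleton (hc : G.Connected) {u a b c : V}
    (hua : u ≠ a) (hS : G.neighborSet u ⊆ {a, b, c}) (h1 : (G.neighborSet u).Subsingleton) :
    ∃! w, G.Adj u w ∧ (w = a ∨ w = b ∨ w = c) ∧ ∀ t, G.Adj u t → t = w := by
  obtain ⟨w, hw⟩ := hc.exists_adj_of_ne hua
  exact ⟨w, ⟨hw, hS hw, fun t ht => h1 ht hw⟩, fun t ht => h1 ht.1 hw⟩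

/-- A second vertex with two neighbours in the triangle would create a book
(same two neighbours) or a gem (different ones). -/
theorem isDiamondWithPendants_of_adj_adj (hG : MDecyclable G) (hc : G.Connected) {x y z v : V}
    (hxy : G.Adj x y) (hxz : G.Adj x z) (hyz : G.Adj y z) (hv : v ∉ ({x, y, z} : Set V))
    (hvx : G.Adj v x) (hvy : G.Adj v y)
    (hout : ∀ u ∉ ({x, y, z} : Set V), G.neighborSet u ⊆ {x, y, z}) :
    IsDiamondWithPendants G := by
  simp only [Set.mem_insert_iff, Set.mem_singleton_iff, not_or] at hv
  obtain ⟨hvx', hvy', hvz'⟩ := hv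
  have hvz : ¬ G.Adj v z := fun hvz =>
    not_mDecyclable_of_K4 hxy hxz hvx.symm hyz hvy.symm hvz.symm hG
  refine ⟨y, z, x, v, by simp [*, hxy.ne, hxz.ne, hyz.ne, Ne.symm], hyz, hxy.symm, hvy.symm,
    hxz.symm, hvx.symm, fun h => hvz h.symm, fun u huy huz hux huv => ?_⟩
  have hu : u ∉ ({x, y, z} : Set V) := by simp [hux, huy, huz]
  have hS : G.neighborSet u ⊆ {y, z, x} := by
    rw [Set.pair_comm z x, Set.insert_comm y x]; exact hout u hu
  refine existsUnique_adj_of_neighborSet_subsingleton hc huy hS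
    (neighborSet_subsingleton_of_not_adj_adj (hout u hu) (fun hux' huy' => ?_)
      (fun hux' huz' => ?_) (fun huy' huz' => ?_))
  · exact not_mDecyclable_of_book (Ne.symm hvz') (Ne.symm huz) huv.symm hxy hxz hvx.symm
      hux'.symm hyz hvy.symm huy'.symm hG
  · exact not_mDecyclable_of_gem hvz' huy.symm huv.symm hvy hyz huz'.symm hvx.symm hxy hxz
      hux'.symm hG
  · exact not_mDecyclable_of_gem hvz' hux.symm huv.symm hvx hxz huz'.symm hvy.symm hxy.symm hyz
      huy'.symm hG

theorem isTriangleWithPendants_or_isDiamondWithPendants (hG : MDecyclable G)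
    (hc : G.Connected) {x y z : V} (hxy : G.Adj x y) (hxz : G.Adj x z) (hyz : G.Adj y z)
    (hout : ∀ u ∉ ({x, y, z} : Set V), G.neighborSet u ⊆ {x, y, z}) :
    IsTriangleWithPendants G ∨ IsDiamondWithPendants G := by
  by_cases h : ∃ v ∉ ({x, y, z} : Set V),
      G.Adj v x ∧ G.Adj v y ∨ G.Adj v x ∧ G.Adj v z ∨ G.Adj v y ∧ G.Adj v z
  · right
    obtain ⟨v, hv, ⟨hvx, hvy⟩ | ⟨hvx, hvz⟩ | ⟨hvy, hvz⟩⟩ := h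
    · exact isDiamondWithPendants_of_adj_adj hG hc hxy hxz hyz hv hvx hvy hout
    · have hT : ({x, z, y} : Set V) = {x, y, z} := by rw [Set.pair_comm]
      exact isDiamondWithPendants_of_adj_adj hG hc hxz hxy hyz.symm (hT ▸ hv) hvx hvz
        (hT ▸ hout)
    · have hT : ({y, z, x} : Set V) = {x, y, z} := by rw [Set.pair_comm z x, Set.insert_comm]
      exact isDiamondWithPendants_of_adj_adj hG hc hyz hxy.symm hxz.symm (hT ▸ hv) hvy hvz
        (hT ▸ hout)
  · left
    push Not at h
    refine ⟨x, y, z, hxy.ne, hxz.ne, hyz.ne, hxy, hxz, hyz, fun u hux huy huz => ?_⟩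
    have hu : u ∉ ({x, y, z} : Set V) := by simp [hux, huy, huz]
    obtain ⟨hnxy, hnxz, hnyz⟩ := h u hu
    exact existsUnique_adj_of_neighborSet_subsingleton hc hux (hout u hu)
      (neighborSet_subsingleton_of_not_adj_adj (hout u hu) hnxy hnxz hnyz)

theorem SplitGraph.isStar_or_isDoubleStar_or_isTriangleWithPendants_or_isDiamondWithPendants
    (hsp : SplitGraph G) (hc : G.Connected) (hG : MDecyclable G) :
    IsStar G ∨ IsDoubleStar G ∨ IsTriangleWithPendants G ∨ IsDiamondWithPendants G := by
  obtain ⟨K, I, hKI, -, hK, hI⟩ := hsp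
  have hnbr : ∀ u ∉ K, G.neighborSet u ⊆ K := fun u hu t ht =>
    (hKI t).resolve_right fun htI => hI u ((hKI u).resolve_left hu) t htI ht
  have htri : ∀ {x y z : V}, G.Adj x y → G.Adj x z → G.Adj y z → K ⊆ {x, y, z} →
      IsTriangleWithPendants G ∨ IsDiamondWithPendants G := fun hxy hxz hyz hKT =>
    isTriangleWithPendants_or_isDiamondWithPendants hG hc hxy hxz hyz
      fun u hu => (hnbr u fun h => hu (hKT h)).trans hKT
  rcases K.subsingleton_or_nontrivial with hKs | ⟨x, hx, y, hy, hxy⟩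
  · left
    obtain ⟨c, hKc⟩ : ∃ c, K ⊆ {c} := by
      rcases hKs.eq_empty_or_singleton with rfl | ⟨c, rfl⟩
      exacts [⟨hc.nonempty.some, Set.empty_subset _⟩, ⟨c, subset_rfl⟩]
    refine isStar_of_forall_adj hc (c := c) fun u v huv => ?_
    by_cases hu : u ∈ K
    exacts [Or.inl (hKc hu), Or.inr (hKc (hnbr u hu huv))]
  right
  have hxy' : G.Adj x y := hK hx hy hxy
  by_cases hz : ∃ z ∈ K, z ≠ x ∧ z ≠ y
  · obtain ⟨z, hz, hzx, hzy⟩ := hz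
    refine Or.inr (htri hxy' (hK hx hz hzx.symm) (hK hy hz hzy.symm) fun u hu => ?_)
    by_contra! h
    simp only [Set.mem_insert_iff, Set.mem_singleton_iff, not_or] at h
    exact not_mDecyclable_of_K4 hxy' (hK hx hz hzx.symm) (hK hx hu (Ne.symm h.1))
      (hK hy hz hzy.symm) (hK hy hu (Ne.symm h.2.1)) (hK hz hu (Ne.symm h.2.2)) hG
  push Not at hz
  have hKxy : K ⊆ {x, y} := fun u hu => by
    by_cases hux : u = x
    exacts [Or.inl hux, Or.inr (hz u hu hux)]
  by_cases hv : ∃ v, G.Adj v x ∧ G.Adj v y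
  · obtain ⟨v, hvx, hvy⟩ := hv
    have hxyv : ({x, y} : Set V) ⊆ {x, y, v} :=
      Set.insert_subset_insert (Set.singleton_subset_iff.mpr (Set.mem_insert y {v}))
    exact Or.inr (htri hxy' hvx.symm hvy.symm (hKxy.trans hxyv))
  · exact Or.inl (isDoubleStar_of_forall_adj hc hxy'
      (fun u hu => (hnbr u fun h => hu (hKxy h)).trans hKxy) (not_exists.mp hv))

theorem IsStar.isAcyclic (h : IsStar G) : G.IsAcyclic := by
  obtain ⟨c, -, hc⟩ := h
  refine isAcyclic_of_neighborSet_subsingleton (a := c) (b := c) (c := c)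
    (fun u hu _ _ s hs t ht => ?_) (G.irrefl)
  rw [(hc u s hs).resolve_left hu, (hc u t ht).resolve_left hu]

theorem IsDoubleStar.isAcyclic (h : IsDoubleStar G) : G.IsAcyclic := by
  obtain ⟨x, y, -, -, h⟩ := h
  refine isAcyclic_of_neighborSet_subsingleton (a := x) (b := x) (c := y)
    (fun u hux _ huy s hs t ht => ?_) G.irrefl
  obtain ⟨-, hboth, hnbr⟩ := h u hux huy
  rcases hnbr s hs with rfl | rfl <;> rcases hnbr t ht with rfl | rfl
  exacts [rfl, absurd ⟨hs.symm, ht.symm⟩ hboth, absurd ⟨ht.symm, hs.symm⟩ hboth, rfl]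

theorem IsTriangleWithPendants.mDecyclable (h : IsTriangleWithPendants G) : MDecyclable G := by
  obtain ⟨a, b, c, -, -, -, hab, -, -, hpend⟩ := h
  refine ⟨{s(a, b)}, isMatchingIn_singleton hab, isAcyclic_of_neighborSet_subsingleton
    (a := a) (b := b) (c := c) (fun u hua hub huc => ?_) fun h => (deleteEdges_adj.mp h).2 rfl⟩
  obtain ⟨w, ⟨-, -, hw⟩, -⟩ := hpend u hua hub huc
  exact (neighborSet_subsingleton_of_forall_adj_eq hw).anti
    (neighborSet_mono (G.deleteEdges_le _) u)

/-- Removing `s(a, b)` and `s(c, d)` leaves `a` as the only neighbour of `d`: `b` and `d` are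
not adjacent, and any other neighbour of `d` would be a pendant vertex attached outside
`{a, b, c}`. -/
theorem IsDiamondWithPendants.mDecyclable (h : IsDiamondWithPendants G) : MDecyclable G := by
  obtain ⟨a, b, c, d, hnd, hab, -, -, -, hcd, hbd, hpend⟩ := h
  simp only [List.nodup_cons, List.mem_cons, List.not_mem_nil, not_or, List.nodup_nil] at hnd
  obtain ⟨⟨hab', hac', had', -⟩, ⟨hbc', hbd', -⟩, ⟨hcd', -⟩, -⟩ := hnd
  refine ⟨{s(a, b), s(c, d)}, isMatchingIn_pair hab hcd hac' had' hbc' hbd',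
    isAcyclic_of_neighborSet_subsingleton (a := a) (b := b) (c := c)
      (fun u hua hub huc => ?_) fun h => (deleteEdges_adj.mp h).2 (by simp)⟩
  by_cases hud : u = d
  · subst hud
    refine neighborSet_subsingleton_of_forall_adj_eq (w := a) fun t ht => ?_
    obtain ⟨hut, hM⟩ := deleteEdges_adj.mp ht
    by_contra hta
    by_cases htb : t = b
    · exact hbd (htb ▸ hut.symm)
    by_cases htc : t = c
    · exact hM (by simp [htc, Sym2.eq_swap])
    obtain ⟨w, ⟨-, hw, hwt⟩, -⟩ := hpend t hta htb htc hut.ne.symm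
    rcases hw with rfl | rfl | rfl
    exacts [hua (hwt u hut.symm), hub (hwt u hut.symm), huc (hwt u hut.symm)]
  · obtain ⟨w, ⟨-, -, hw⟩, -⟩ := hpend u hua hub huc hud
    exact (neighborSet_subsingleton_of_forall_adj_eq hw).anti
      (neighborSet_mono (G.deleteEdges_le _) u)

end

theorem stmt16 {V : Type*} (G : SimpleGraph V) (hsp : SplitGraph G)
    (hc : G.Connected) :
    MDecyclable G ↔
      IsStar G ∨ IsDoubleStar G ∨ IsTriangleWithPendants G ∨
        IsDiamondWithPendants G := by
  refine ⟨hsp.isStar_or_isDoubleStar_or_isTriangleWithPendants_or_isDiamondWithPendants hc, ?_⟩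
  rintro (h | h | h | h)
  exacts [h.isAcyclic.mDecyclable, h.isAcyclic.mDecyclable, h.mDecyclable, h.mDecyclable]
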